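/- arXiv:2105.05153 — 4 statements merged into one kernel-verified Lean document; each statement's English description precedes it below -/
import Mathlib

section
/- Let a : [0,T] → ℝ be bounded and satisfy |a(t+τ) − a(t)| ≤ (C/ν(t))·μ(τ) for 0 ≤ τ ≤ τ₀ and t, t+τ ∈ (0,T], where ν is non-decreasing, continuous and satisfies ν(t/2) ≥ κ·ν(t). Let ã_ε be the truncation of a (set equal to a(ε) for t ≤ ε and a(T) for t ≥ T) and let a_ε = ρ_ε ∗ ã_ε be its mollification at scale ε, with a mollifier ρ supported in [−1,1]. Then there is a constant C' > 0, depending only on C, ρ, κ and ‖a‖_∞, such that |a_ε(t) − ã_ε(t)| ≤ C'·min{1, μ(ε)/ν(t)} for all t ∈ (0,T] and all 0 < ε ≤ τ₀. -/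
open Real MeasureTheory

/-- Truncation of `a` at levels `ε` and `T`: equal to `a ε` for `t ≤ ε`,
`a t` for `ε ≤ t ≤ T`, `a T` for `t ≥ T`. -/
noncomputable def trunc (a : ℝ → ℝ) (T ε t : ℝ) : ℝ := a (max ε (min t T))

/-- Mollification of the truncation at scale `ε`:
`a_ε(t) = ∫_{-ε}^{ε} (1/ε)ρ(s/ε) · ã_ε(t-s) ds`. -/
noncomputable def mollify (ρ a : ℝ → ℝ) (T ε t : ℝ) : ℝ :=
  ∫ s in (-ε)..ε, (ε⁻¹ * ρ (s / ε)) * trunc a T ε (t - s)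

/-- Approximation estimate: `|a_ε(t) − ã_ε(t)| ≤ C'·min{1, μ(ε)/ν(t)}`. -/
theorem mollification_estimate (T τ₀ C κ A : ℝ) (hτ₀ : 0 < τ₀) (hτ₀T : τ₀ ≤ T)
    (hC : 0 < C) (hκ : 0 < κ) (μ ν a ρ : ℝ → ℝ)
    -- μ is a modulus of continuity on [0, τ₀]
    (hμcont : ContinuousOn μ (Set.Icc 0 τ₀))
    (hμconc : ConcaveOn ℝ (Set.Icc 0 τ₀) μ)
    (hμmono : StrictMonoOn μ (Set.Icc 0 τ₀))
    (hμ0 : μ 0 = 0) (hμnonneg : ∀ τ ∈ Set.Icc (0:ℝ) τ₀, 0 ≤ μ τ)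
    -- ν is positive, continuous, non-decreasing on (0,T], with doubling
    (hνpos : ∀ t ∈ Set.Ioc (0:ℝ) T, 0 < ν t)
    (hνcont : ContinuousOn ν (Set.Ioc 0 T))
    (hνmono : MonotoneOn ν (Set.Ioc 0 T))
    (hνdoub : ∀ t ∈ Set.Ioc (0:ℝ) T, ν (t / 2) ≥ κ * ν t)
    -- a is bounded, with modulus-of-continuity bound blowing up like 1/ν(t)
    (hA : ∀ t ∈ Set.Icc (0:ℝ) T, |a t| ≤ A)
    (ha : ∀ t τ : ℝ, 0 ≤ τ → τ ≤ τ₀ → 0 < t → t + τ ≤ T →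
      |a (t + τ) - a t| ≤ C / ν t * μ τ)
    -- ρ is a smooth mollifier supported in [-1,1]
    (hρsmooth : ContDiff ℝ (⊤ : ℕ∞) ρ)
    (hρsupp : Function.support ρ ⊆ Set.Icc (-1) 1)
    (hρnonneg : ∀ s, 0 ≤ ρ s)
    (hρint : ∫ s, ρ s = 1) :
    ∃ C' > 0, ∀ ε : ℝ, 0 < ε → ε ≤ τ₀ → ∀ t ∈ Set.Ioc (0:ℝ) T,
      |mollify ρ a T ε t - trunc a T ε t| ≤ C' * min 1 (μ ε / ν t) := by
  have hT : (0:ℝ) < T := lt_of_lt_of_le hτ₀ hτ₀T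
  have hA0 : 0 ≤ A := le_trans (abs_nonneg _) (hA T ⟨hT.le, le_refl T⟩)
  have hκ1 : κ ≤ 1 := by
    have h1 := hνdoub T ⟨hT, le_refl T⟩
    have h2 := hνmono (a := T/2) (b := T) ⟨by linarith, by linarith⟩ ⟨hT, le_refl T⟩ (by linarith)
    have h3 := hνpos T ⟨hT, le_refl T⟩
    nlinarith
  -- oscillation estimate for a with base point the smaller one
  have hosc : ∀ p q : ℝ, p ∈ Set.Ioc 0 T → q ∈ Set.Ioc 0 T → p ≤ q → q - p ≤ τ₀ →
      |a q - a p| ≤ C / ν p * μ (q - p) := by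
    intro p q hp hq hpq hd
    have := ha p (q - p) (by linarith) hd hp.1 (by linarith [hq.2])
    simpa using this
  -- continuity of a on (0, T]
  have hacont : ContinuousOn a (Set.Ioc 0 T) := by
    intro x hx
    have hx0 : 0 < x := hx.1
    have hνx : 0 < ν x := hνpos x hx
    have hbound : ∀ y ∈ Set.Ioc 0 T, |y - x| ≤ min τ₀ (x/2) →
        |a y - a x| ≤ C/(κ * ν x) * μ |y - x| := by
      intro y hy hyx
      have hyx1 : |y - x| ≤ τ₀ := le_trans hyx (min_le_left _ _)
      have hyx2 : |y - x| ≤ x/2 := le_trans hyx (min_le_right _ _)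
      rcases le_total x y with h | h
      · have h0 := hosc x y hx hy h (by rw [abs_of_nonneg (by linarith)] at hyx1; linarith)
        rw [abs_of_nonneg (by linarith : (0:ℝ) ≤ y - x)]
        refine le_trans h0 ?_
        have hμn : 0 ≤ μ (y - x) := hμnonneg _ ⟨by linarith, by rw [abs_of_nonneg (by linarith)] at hyx1; linarith⟩
        have : C / ν x ≤ C / (κ * ν x) := by
          apply div_le_div_of_nonneg_left hC.le (by positivity)
          nlinarith
        nlinarith
      · have hxy2 : x - y ≤ x/2 := by rw [abs_of_nonpos (by linarith)] at hyx2; linarith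
        have hy2 : x/2 ≤ y := by linarith
        have hx2 : x/2 ∈ Set.Ioc (0:ℝ) T := ⟨by linarith, by linarith [hx.2]⟩
        have h0 := hosc y x hy hx h (by rw [abs_of_nonpos (by linarith)] at hyx1; linarith)
        rw [abs_sub_comm, abs_of_nonpos (by linarith : y - x ≤ 0), neg_sub]
        refine le_trans h0 ?_
        have hνy : κ * ν x ≤ ν y := by
          have := hνdoub x hx
          have := hνmono hx2 hy hy2
          linarith
        have hμn : 0 ≤ μ (x - y) := hμnonneg _ ⟨by linarith, by rw [abs_of_nonpos (by linarith)] at hyx1; linarith⟩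
        have hνy0 : 0 < ν y := hνpos y hy
        have : C / ν y ≤ C / (κ * ν x) :=
          div_le_div_of_nonneg_left hC.le (by positivity) hνy
        nlinarith
    have hmem : ∀ᶠ y in nhdsWithin x (Set.Ioc 0 T), |a y - a x| ≤ C/(κ * ν x) * μ |y - x| := by
      have hpos : 0 < min τ₀ (x/2) := lt_min hτ₀ (by linarith)
      have hev : ∀ᶠ y in nhds x, |y - x| ≤ min τ₀ (x/2) := by
        filter_upwards [Metric.ball_mem_nhds x hpos] with y hy
        exact le_of_lt (by simpa [Real.dist_eq] using hy)
      filter_upwards [self_mem_nhdsWithin, nhdsWithin_le_nhds hev] with y h1 h2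
      exact hbound y h1 h2
    have h0 : Filter.Tendsto (fun y : ℝ => |y - x|) (nhdsWithin x (Set.Ioc 0 T))
        (nhdsWithin 0 (Set.Icc 0 τ₀)) := by
      rw [tendsto_nhdsWithin_iff]
      constructor
      · have hc : Continuous (fun y : ℝ => |y - x|) := (continuous_id.sub continuous_const).abs
        have := (hc.tendsto x).mono_left (nhdsWithin_le_nhds (s := Set.Ioc 0 T))
        simpa using this
      · have hev : ∀ᶠ y in nhds x, |y - x| ≤ τ₀ := by
          filter_upwards [Metric.ball_mem_nhds x hτ₀] with y hy
          exact le_of_lt (by simpa [Real.dist_eq] using hy)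
        filter_upwards [nhdsWithin_le_nhds hev] with y hy
        exact ⟨abs_nonneg _, hy⟩
    have h1 := (hμcont 0 ⟨le_refl 0, hτ₀.le⟩).tendsto
    rw [hμ0] at h1
    have h2 := h1.comp h0
    have htend : Filter.Tendsto (fun y => C/(κ * ν x) * μ |y - x|)
        (nhdsWithin x (Set.Ioc 0 T)) (nhds 0) := by
      have := h2.const_mul (C/(κ * ν x))
      simpa using this
    have h3 : Filter.Tendsto (fun y => a y - a x) (nhdsWithin x (Set.Ioc 0 T)) (nhds 0) :=
      squeeze_zero_norm' (by simpa [Real.norm_eq_abs] using hmem) htend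
    have h4 := h3.add_const (a x)
    show Filter.Tendsto a (nhdsWithin x (Set.Ioc 0 T)) (nhds (a x))
    simpa using h4
  -- the constant
  refine ⟨max (2*A) (C/κ) + 1, by positivity, ?_⟩
  intro ε hε hετ₀ t ht
  have hεT : ε ≤ T := le_trans hετ₀ hτ₀T
  have hνt : 0 < ν t := hνpos t ht
  have hμε : 0 ≤ μ ε := hμnonneg ε ⟨hε.le, hετ₀⟩
  set φ : ℝ → ℝ := fun x => max ε (min x T) with hφ
  have hφmem : ∀ x, φ x ∈ Set.Icc ε T := fun x =>
    ⟨le_max_left _ _, max_le hεT (min_le_right _ _)⟩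
  have hφIoc : ∀ x, φ x ∈ Set.Ioc 0 T := fun x =>
    ⟨lt_of_lt_of_le hε (hφmem x).1, (hφmem x).2⟩
  have hφlip : ∀ x y, |φ x - φ y| ≤ |x - y| := by
    intro x y
    calc |φ x - φ y| ≤ max |ε - ε| |min x T - min y T| := abs_max_sub_max_le_max _ _ _ _
    _ = |min x T - min y T| := by simp
    _ ≤ max |x - y| |T - T| := abs_min_sub_min_le_max _ _ _ _
    _ = |x - y| := by simp
  -- continuity of trunc
  have hgcont : Continuous (fun x => trunc a T ε x) := by
    have hφc : Continuous φ := (continuous_const.max ((continuous_id.min continuous_const)))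
    exact hacont.comp_continuous hφc hφIoc
  -- the pointwise oscillation bound
  set M : ℝ := min (2*A) (C/(κ * ν t) * μ ε) with hM
  have hνt2 : κ * ν t ≤ ν (t/2) := hνdoub t ht
  have ht2 : t/2 ∈ Set.Ioc (0:ℝ) T := ⟨by linarith [ht.1], by linarith [ht.2]⟩
  have hosc2 : ∀ s : ℝ, |s| ≤ ε → |trunc a T ε (t - s) - trunc a T ε t| ≤ M := by
    intro s hs
    have hsε : s ≤ ε := le_trans (le_abs_self _) hs
    set u := φ (t - s) with hu
    set v := φ t with hv
    have huv : |u - v| ≤ ε := le_trans (hφlip _ _) (by simpa using hs)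
    have hu2 : t/2 ≤ u := by
      rcases le_total t (2*ε) with h | h
      · exact le_trans (by linarith) (hφmem _).1
      · have h1 : t/2 ≤ min (t - s) T := le_min (by linarith) (by linarith [ht.2])
        exact le_trans h1 (le_max_right _ _)
    have hv2 : t/2 ≤ v := le_trans (by linarith [ht.1]) (le_max_of_le_right (le_min (le_refl t) ht.2) : t ≤ v)
    have key : ∀ p q : ℝ, p ∈ Set.Icc ε T → q ∈ Set.Icc ε T → p ≤ q → q - p ≤ ε →
        t/2 ≤ p → |a q - a p| ≤ M := by
      intro p q hp hq hpq hd hp2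
      have hpIoc : p ∈ Set.Ioc 0 T := ⟨lt_of_lt_of_le hε hp.1, hp.2⟩
      have hqIoc : q ∈ Set.Ioc 0 T := ⟨lt_of_lt_of_le hε hq.1, hq.2⟩
      refine le_min ?_ ?_
      · have h1 := hA q ⟨hqIoc.1.le, hq.2⟩
        have h2 := hA p ⟨hpIoc.1.le, hp.2⟩
        calc |a q - a p| ≤ |a q| + |a p| := abs_sub _ _
        _ ≤ 2 * A := by linarith
      · have h0 := hosc p q hpIoc hqIoc hpq (le_trans hd hετ₀)
        refine le_trans h0 ?_
        have hμle : μ (q - p) ≤ μ ε :=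
          hμmono.monotoneOn ⟨by linarith, le_trans hd hετ₀⟩ ⟨hε.le, hετ₀⟩ hd
        have hμn : 0 ≤ μ (q - p) := hμnonneg _ ⟨by linarith, le_trans hd hετ₀⟩
        have hνp : κ * ν t ≤ ν p := le_trans hνt2 (hνmono ht2 hpIoc hp2)
        have hνp0 : 0 < ν p := hνpos p hpIoc
        have hC1 : C / ν p ≤ C / (κ * ν t) :=
          div_le_div_of_nonneg_left hC.le (by positivity) hνp
        calc C / ν p * μ (q - p) ≤ C / ν p * μ ε :=
              mul_le_mul_of_nonneg_left hμle (by positivity)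
        _ ≤ C / (κ * ν t) * μ ε := mul_le_mul_of_nonneg_right hC1 hμε
    have huvmem := hφmem (t - s)
    have hvmem := hφmem t
    show |a u - a v| ≤ M
    rcases le_total u v with h | h
    · rw [abs_sub_comm]
      exact key u v huvmem hvmem h (by rw [abs_sub_comm, abs_of_nonneg (by linarith)] at huv; linarith) hu2
    · exact key v u hvmem huvmem h (by rw [abs_of_nonneg (by linarith)] at huv; linarith) hv2
  have hMnonneg : 0 ≤ M := le_trans (abs_nonneg _) (hosc2 0 (by simpa using hε.le))
  -- unit mass of the mollifier
  have hρcont : Continuous ρ := hρsmooth.continuous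
  have hρ1 : ∫ s in (-1:ℝ)..1, ρ s = 1 := by
    rw [intervalIntegral.integral_of_le (by norm_num), ← MeasureTheory.integral_Icc_eq_integral_Ioc,
      MeasureTheory.setIntegral_eq_integral_of_forall_compl_eq_zero (fun x hx => ?_), hρint]
    by_contra hne
    exact hx (hρsupp (Function.mem_support.2 hne))
  have hunit : ∫ s in (-ε)..ε, ε⁻¹ * ρ (s / ε) = 1 := by
    rw [intervalIntegral.integral_const_mul, intervalIntegral.integral_comp_div ρ hε.ne',
      neg_div, div_self hε.ne']
    rw [hρ1]
    field_simp
    simp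
  -- integrability
  have hker : Continuous (fun s : ℝ => ε⁻¹ * ρ (s / ε)) :=
    continuous_const.mul (hρcont.comp (continuous_id.div_const ε))
  have hint1 : IntervalIntegrable (fun s => (ε⁻¹ * ρ (s / ε)) * trunc a T ε (t - s))
      volume (-ε) ε :=
    (hker.mul (hgcont.comp (continuous_const.sub continuous_id))).intervalIntegrable _ _
  have hint2 : IntervalIntegrable (fun s => (ε⁻¹ * ρ (s / ε)) * trunc a T ε t)
      volume (-ε) ε := (hker.mul continuous_const).intervalIntegrable _ _
  have hint3 : IntervalIntegrable (fun s => (ε⁻¹ * ρ (s / ε)) *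
      (trunc a T ε (t - s) - trunc a T ε t)) volume (-ε) ε :=
    (hker.mul ((hgcont.comp (continuous_const.sub continuous_id)).sub continuous_const)).intervalIntegrable _ _
  have hintM : IntervalIntegrable (fun s => (ε⁻¹ * ρ (s / ε)) * M) volume (-ε) ε :=
    (hker.mul continuous_const).intervalIntegrable _ _
  have hintabs : IntervalIntegrable (fun s => |(ε⁻¹ * ρ (s / ε)) *
      (trunc a T ε (t - s) - trunc a T ε t)|) volume (-ε) ε :=
    (hker.mul ((hgcont.comp (continuous_const.sub continuous_id)).sub continuous_const)).abs.intervalIntegrable _ _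
  -- rewrite the difference as an integral
  have hdiff : mollify ρ a T ε t - trunc a T ε t =
      ∫ s in (-ε)..ε, (ε⁻¹ * ρ (s / ε)) * (trunc a T ε (t - s) - trunc a T ε t) := by
    have h1 : ∫ s in (-ε)..ε, (ε⁻¹ * ρ (s / ε)) * (trunc a T ε (t - s) - trunc a T ε t)
        = (∫ s in (-ε)..ε, (ε⁻¹ * ρ (s / ε)) * trunc a T ε (t - s))
          - ∫ s in (-ε)..ε, (ε⁻¹ * ρ (s / ε)) * trunc a T ε t := by
      rw [← intervalIntegral.integral_sub hint1 hint2]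
      congr 1
      funext s
      ring
    rw [h1, mollify, intervalIntegral.integral_mul_const, hunit, one_mul]
  -- the main bound
  have hmain : |mollify ρ a T ε t - trunc a T ε t| ≤ M := by
    rw [hdiff]
    calc |∫ s in (-ε)..ε, (ε⁻¹ * ρ (s / ε)) * (trunc a T ε (t - s) - trunc a T ε t)|
        ≤ ∫ s in (-ε)..ε, |(ε⁻¹ * ρ (s / ε)) * (trunc a T ε (t - s) - trunc a T ε t)| :=
          intervalIntegral.abs_integral_le_integral_abs (by linarith)
      _ ≤ ∫ s in (-ε)..ε, (ε⁻¹ * ρ (s / ε)) * M := by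
          apply intervalIntegral.integral_mono_on (by linarith) hintabs hintM
          intro s hsmem
          have hsabs : |s| ≤ ε := abs_le.2 ⟨hsmem.1, hsmem.2⟩
          have hkpos : 0 ≤ ε⁻¹ * ρ (s / ε) := mul_nonneg (by positivity) (hρnonneg _)
          rw [abs_mul, abs_of_nonneg hkpos]
          exact mul_le_mul_of_nonneg_left (hosc2 s hsabs) hkpos
      _ = M := by rw [intervalIntegral.integral_mul_const, hunit, one_mul]
  refine le_trans hmain ?_
  rcases le_total 1 (μ ε / ν t) with h | h
  · rw [min_eq_left h]
    calc M ≤ 2*A := min_le_left _ _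
    _ ≤ (max (2*A) (C/κ) + 1) * 1 := by rw [mul_one]; linarith [le_max_left (2*A) (C/κ)]
  · rw [min_eq_right h]
    calc M ≤ C/(κ * ν t) * μ ε := min_le_right _ _
    _ = (C/κ) * (μ ε / ν t) := by field_simp
    _ ≤ (max (2*A) (C/κ) + 1) * (μ ε / ν t) := by
        refine mul_le_mul_of_nonneg_right ?_ (div_nonneg hμε hνt.le)
        linarith [le_max_right (2*A) (C/κ)]
end

section
/- Under the hypotheses of the mollification lemma, the derivative of the mollified function satisfies |a_ε'(t)| ≤ (C''/ε)·min{1, μ(ε)/ν(t)} for all t ∈ (0,T] and all 0 < ε ≤ τ₀, where C'' depends only on C, ρ, κ and ‖a‖_∞. -/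
open Real MeasureTheory

section helpers
open Convolution
variable {T τ₀ C κ ε : ℝ} {μ ν a : ℝ → ℝ}

lemma vanish_at_pm_one (f : ℝ → ℝ) (h : Function.support f ⊆ Set.Icc (-1) 1)
    (hc : Continuous f) {x : ℝ} (hx : 1 ≤ |x|) : f x = 0 := by
  rcases lt_or_eq_of_le hx with hx' | hx'
  · by_contra hne
    have hmem := h (Function.mem_support.2 hne)
    rw [Set.mem_Icc, ← abs_le] at hmem
    exact absurd hmem (not_le.2 hx')
  · rcases abs_eq (by norm_num : (0:ℝ) ≤ 1) |>.mp hx'.symm with h1 | h1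
    · subst h1
      have h0 : Filter.Tendsto f (nhdsWithin 1 (Set.Ioi (1:ℝ))) (nhds 0) := by
        refine Filter.Tendsto.congr' ?_ tendsto_const_nhds
        filter_upwards [self_mem_nhdsWithin] with y hy
        by_contra hne
        exact absurd (h (Function.mem_support.2 fun h' => hne h'.symm)).2 (not_le.2 hy)
      exact tendsto_nhds_unique hc.continuousWithinAt h0
    · subst h1
      have h0 : Filter.Tendsto f (nhdsWithin (-1) (Set.Iio (-1:ℝ))) (nhds 0) := by
        refine Filter.Tendsto.congr' ?_ tendsto_const_nhds
        filter_upwards [self_mem_nhdsWithin] with y hy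
        by_contra hne
        exact absurd (h (Function.mem_support.2 fun h' => hne h'.symm)).1 (not_le.2 hy)
      exact tendsto_nhds_unique hc.continuousWithinAt h0

lemma abs_sub_mod
    (ha : ∀ t τ : ℝ, 0 ≤ τ → τ ≤ τ₀ → 0 < t → t + τ ≤ T →
      |a (t + τ) - a t| ≤ C / ν t * μ τ)
    {x y : ℝ} (hx : 0 < x) (hy : 0 < y) (hyT : y ≤ T) (hxT : x ≤ T)
    (hd : |x - y| ≤ τ₀) :
    |a x - a y| ≤ C / ν (min x y) * μ (|x - y|) := by
  rcases le_total x y with h | h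
  · have hd' : y - x ≤ τ₀ := by rw [abs_sub_comm, abs_of_nonneg (by linarith)] at hd; exact hd
    have key := ha x (y - x) (by linarith) hd' hx (by linarith)
    rw [add_sub_cancel] at key
    rw [abs_sub_comm (a x), abs_sub_comm x y, abs_of_nonneg (by linarith : (0:ℝ) ≤ y - x),
      min_eq_left h]
    exact key
  · have hd' : x - y ≤ τ₀ := by rw [abs_of_nonneg (by linarith)] at hd; exact hd
    have key := ha y (x - y) (by linarith) hd' hy (by linarith)
    rw [add_sub_cancel] at key
    rw [abs_of_nonneg (by linarith : (0:ℝ) ≤ x - y), min_eq_right h]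
    exact key

lemma clamp_mem (hε : 0 < ε) (hεT : ε ≤ T) (t : ℝ) :
    max ε (min t T) ∈ Set.Icc ε T :=
  ⟨le_max_left _ _, max_le hεT (min_le_right _ _)⟩

lemma clamp_lip (t s : ℝ) : |max ε (min t T) - max ε (min s T)| ≤ |t - s| := by
  calc |max ε (min t T) - max ε (min s T)|
      = |max (min t T) ε - max (min s T) ε| := by rw [max_comm ε, max_comm ε]
    _ ≤ |min t T - min s T| := abs_max_sub_max_le_abs _ _ _
    _ ≤ max |t - s| |T - T| := abs_min_sub_min_le_max _ _ _ _
    _ ≤ |t - s| := by simp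

lemma trunc_continuous (hτ₀ : 0 < τ₀) (hτ₀T : τ₀ ≤ T) (hC : 0 < C)
    (hμcont : ContinuousOn μ (Set.Icc 0 τ₀)) (hμ0 : μ 0 = 0)
    (hμnonneg : ∀ τ ∈ Set.Icc (0:ℝ) τ₀, 0 ≤ μ τ)
    (hνpos : ∀ t ∈ Set.Ioc (0:ℝ) T, 0 < ν t)
    (hνmono : MonotoneOn ν (Set.Ioc 0 T))
    (ha : ∀ t τ : ℝ, 0 ≤ τ → τ ≤ τ₀ → 0 < t → t + τ ≤ T →
      |a (t + τ) - a t| ≤ C / ν t * μ τ)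
    (hε : 0 < ε) (hετ : ε ≤ τ₀) :
    Continuous (trunc a T ε) := by
  have hεT : ε ≤ T := hετ.trans hτ₀T
  have hνε : 0 < ν ε := hνpos ε ⟨hε, hεT⟩
  rw [Metric.continuous_iff]
  intro t δ hδ
  have hμc : ContinuousWithinAt μ (Set.Icc 0 τ₀) 0 := hμcont 0 ⟨le_refl _, hτ₀.le⟩
  rw [Metric.continuousWithinAt_iff] at hμc
  obtain ⟨η, hη, hμη⟩ := hμc (δ * ν ε / C) (by positivity)
  refine ⟨min η τ₀, lt_min hη hτ₀, fun s hst => ?_⟩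
  rw [Real.dist_eq] at hst
  set p := max ε (min s T) with hp
  set q := max ε (min t T) with hq
  have hpm := clamp_mem (T := T) hε hεT s
  have hqm := clamp_mem (T := T) hε hεT t
  have hlip : |p - q| ≤ |s - t| := clamp_lip s t
  have hd : |p - q| ≤ τ₀ :=
    hlip.trans (le_of_lt (lt_of_lt_of_le hst (min_le_right _ _)))
  have key := abs_sub_mod (ν := ν) ha (hε.trans_le hpm.1) (hε.trans_le hqm.1) hqm.2 hpm.2 hd
  have hνmin : ν ε ≤ ν (min p q) := by
    apply hνmono ⟨hε, hεT⟩
      ⟨lt_min (hε.trans_le hpm.1) (hε.trans_le hqm.1), (min_le_left _ _).trans hpm.2⟩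
    exact le_min hpm.1 hqm.1
  have hfrac : C / ν (min p q) ≤ C / ν ε := div_le_div_of_nonneg_left hC.le hνε hνmin
  have habs : |p - q| ∈ Set.Icc (0:ℝ) τ₀ := ⟨abs_nonneg _, hd⟩
  have hμsmall : μ (|p - q|) < δ * ν ε / C := by
    have h2 := hμη habs (by
      rw [Real.dist_eq, sub_zero, abs_abs]
      exact lt_of_le_of_lt hlip (lt_of_lt_of_le hst (min_le_left _ _)))
    rw [Real.dist_eq, hμ0, sub_zero] at h2
    exact lt_of_le_of_lt (le_abs_self _) h2
  have hμnn : 0 ≤ μ (|p - q|) := hμnonneg _ habs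
  have step1 : |a p - a q| ≤ C / ν ε * μ (|p - q|) :=
    key.trans (mul_le_mul_of_nonneg_right hfrac hμnn)
  have step2 : C / ν ε * μ (|p - q|) < C / ν ε * (δ * ν ε / C) :=
    mul_lt_mul_of_pos_left hμsmall (by positivity)
  have : C / ν ε * (δ * ν ε / C) = δ := by field_simp
  rw [Real.dist_eq]
  show |a p - a q| < δ
  linarith

end helpers

section helpers3
variable {T τ₀ C κ ε : ℝ} {μ ν a : ℝ → ℝ}

lemma trunc_hoelder (hτ₀ : 0 < τ₀) (hτ₀T : τ₀ ≤ T) (hC : 0 < C) (hκ : 0 < κ)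
    (hμmono : StrictMonoOn μ (Set.Icc 0 τ₀))
    (hμnonneg : ∀ τ ∈ Set.Icc (0:ℝ) τ₀, 0 ≤ μ τ)
    (hνpos : ∀ t ∈ Set.Ioc (0:ℝ) T, 0 < ν t)
    (hνmono : MonotoneOn ν (Set.Ioc 0 T))
    (hνdoub : ∀ t ∈ Set.Ioc (0:ℝ) T, ν (t / 2) ≥ κ * ν t)
    (ha : ∀ t τ : ℝ, 0 ≤ τ → τ ≤ τ₀ → 0 < t → t + τ ≤ T →
      |a (t + τ) - a t| ≤ C / ν t * μ τ)
    (hε : 0 < ε) (hετ : ε ≤ τ₀) {t : ℝ} (ht : t ∈ Set.Ioc (0:ℝ) T)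
    {s : ℝ} (hs : |s| ≤ ε) :
    |trunc a T ε (t - s) - trunc a T ε t| ≤ C / (κ * ν t) * μ ε := by
  have hεT : ε ≤ T := hετ.trans hτ₀T
  obtain ⟨ht0, htT⟩ := ht
  set p := max ε (min (t - s) T) with hp
  set q := max ε (min t T) with hq
  have hpm := clamp_mem (T := T) hε hεT (t - s)
  have hqm := clamp_mem (T := T) hε hεT t
  have hlip : |p - q| ≤ |s| := by
    have := clamp_lip (ε := ε) (T := T) (t - s) t
    simpa using this
  have hd : |p - q| ≤ τ₀ := (hlip.trans hs).trans hετ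
  have key := abs_sub_mod (ν := ν) ha (hε.trans_le hpm.1) (hε.trans_le hqm.1) hqm.2 hpm.2 hd
  -- μ monotone
  have hμle : μ (|p - q|) ≤ μ ε := by
    rcases eq_or_lt_of_le (hlip.trans hs) with h | h
    · rw [h]
    · exact le_of_lt (hμmono ⟨abs_nonneg _, hd⟩ ⟨hε.le, hετ⟩ h)
  -- min p q ≥ t / 2
  have hq2 : t / 2 ≤ q := by
    have : min t T = t := min_eq_left htT
    rw [hq, this]
    calc t / 2 ≤ t := by linarith
      _ ≤ max ε t := le_max_right _ _
  have hp2 : t / 2 ≤ p := by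
    rcases le_total t (2 * ε) with h | h
    · calc t / 2 ≤ ε := by linarith
        _ ≤ p := hpm.1
    · have h1 : t / 2 ≤ t - s := by
        have := abs_le.mp hs
        linarith
      calc t / 2 ≤ min (t - s) T := le_min h1 (by linarith)
        _ ≤ p := le_max_right _ _
  have hmin2 : t / 2 ≤ min p q := le_min hp2 hq2
  have hνmin : κ * ν t ≤ ν (min p q) := by
    have h1 : ν (t / 2) ≤ ν (min p q) := by
      apply hνmono ⟨by linarith, by linarith⟩
        ⟨lt_min (hε.trans_le hpm.1) (hε.trans_le hqm.1), (min_le_left _ _).trans hpm.2⟩ hmin2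
    exact le_trans (hνdoub t ⟨ht0, htT⟩) h1
  have hνt : 0 < ν t := hνpos t ⟨ht0, htT⟩
  have hκν : 0 < κ * ν t := by positivity
  have hfrac : C / ν (min p q) ≤ C / (κ * ν t) := div_le_div_of_nonneg_left hC.le hκν hνmin
  have hμnn : 0 ≤ μ (|p - q|) := hμnonneg _ ⟨abs_nonneg _, hd⟩
  calc |trunc a T ε (t - s) - trunc a T ε t| = |a p - a q| := rfl
    _ ≤ C / ν (min p q) * μ (|p - q|) := key
    _ ≤ C / (κ * ν t) * μ ε := by
        apply mul_le_mul hfrac hμle hμnn (by positivity)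

end helpers3

open Convolution

/-- Derivative estimate: `|a_ε'(t)| ≤ (C''/ε)·min{1, μ(ε)/ν(t)}`. -/
theorem mollification_deriv_estimate (T τ₀ C κ A : ℝ) (hτ₀ : 0 < τ₀) (hτ₀T : τ₀ ≤ T)
    (hC : 0 < C) (hκ : 0 < κ) (μ ν a ρ : ℝ → ℝ)
    (hμcont : ContinuousOn μ (Set.Icc 0 τ₀))
    (hμconc : ConcaveOn ℝ (Set.Icc 0 τ₀) μ)
    (hμmono : StrictMonoOn μ (Set.Icc 0 τ₀))
    (hμ0 : μ 0 = 0) (hμnonneg : ∀ τ ∈ Set.Icc (0:ℝ) τ₀, 0 ≤ μ τ)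
    (hνpos : ∀ t ∈ Set.Ioc (0:ℝ) T, 0 < ν t)
    (hνcont : ContinuousOn ν (Set.Ioc 0 T))
    (hνmono : MonotoneOn ν (Set.Ioc 0 T))
    (hνdoub : ∀ t ∈ Set.Ioc (0:ℝ) T, ν (t / 2) ≥ κ * ν t)
    (hA : ∀ t ∈ Set.Icc (0:ℝ) T, |a t| ≤ A)
    (ha : ∀ t τ : ℝ, 0 ≤ τ → τ ≤ τ₀ → 0 < t → t + τ ≤ T →
      |a (t + τ) - a t| ≤ C / ν t * μ τ)
    (hρsmooth : ContDiff ℝ (⊤ : ℕ∞) ρ)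
    (hρsupp : Function.support ρ ⊆ Set.Icc (-1) 1)
    (hρnonneg : ∀ s, 0 ≤ ρ s)
    (hρint : ∫ s, ρ s = 1) :
    ∃ C'' > 0, ∀ ε : ℝ, 0 < ε → ε ≤ τ₀ → ∀ t ∈ Set.Ioc (0:ℝ) T,
      |deriv (mollify ρ a T ε) t| ≤ C'' / ε * min 1 (μ ε / ν t) := by
  have hA0 : 0 ≤ A := (abs_nonneg (a 0)).trans (hA 0 ⟨le_refl 0, by linarith⟩)
  have hρcont : Continuous ρ := hρsmooth.continuous
  have hρcs : HasCompactSupport ρ := HasCompactSupport.intro isCompact_Icc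
    (fun x hx => by by_contra hne; exact hx (hρsupp (Function.mem_support.2 hne)))
  have hρ'cont : Continuous (deriv ρ) := hρsmooth.continuous_deriv (by simp)
  have hρ'cs : HasCompactSupport (deriv ρ) := hρcs.deriv
  have hρ'supp : ∀ x : ℝ, 1 < |x| → deriv ρ x = 0 := by
    intro x hx
    apply Function.notMem_support.mp
    intro hmem
    have : x ∈ Set.Icc (-1:ℝ) 1 :=
      closure_minimal hρsupp isClosed_Icc (support_deriv_subset hmem)
    rw [Set.mem_Icc, ← abs_le] at this
    exact absurd this (not_le.2 hx)
  obtain ⟨x₀, hx₀⟩ := (continuous_abs.comp hρ'cont).exists_forall_ge_of_hasCompactSupport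
    (hρ'cs.comp_left (g := abs) abs_zero)
  set M : ℝ := |deriv ρ x₀| with hM
  have hMb : ∀ s, |deriv ρ s| ≤ M := hx₀
  have hM0 : 0 ≤ M := abs_nonneg _
  refine ⟨2 * M * A + 2 * M * C / κ + 1, by positivity, ?_⟩
  intro ε hε hετ t ht
  have hεT : ε ≤ T := hετ.trans hτ₀T
  have hνt : 0 < ν t := hνpos t ht
  have hμε : 0 ≤ μ ε := hμnonneg ε ⟨hε.le, hετ⟩
  set L : ℝ →L[ℝ] ℝ →L[ℝ] ℝ := ContinuousLinearMap.mul ℝ ℝ with hL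
  set φ : ℝ → ℝ := fun s => ε⁻¹ * ρ (s / ε) with hφ
  set f : ℝ → ℝ := trunc a T ε with hf
  -- basic facts about φ
  have hφ1 : ContDiff ℝ 1 φ :=
    (contDiff_const.mul (hρsmooth.comp (contDiff_id.div_const ε))).of_le (by simp)
  have habs_div : ∀ s : ℝ, |s / ε| = |s| / ε := fun s => by
    rw [abs_div, abs_of_pos hε]
  have hφsupp : ∀ s : ℝ, ε < |s| → φ s = 0 := by
    intro s hs
    have h1 : 1 < |s / ε| := by rw [habs_div]; rw [lt_div_iff₀ hε]; linarith
    have : ρ (s / ε) = 0 := by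
      by_contra hne
      have := hρsupp (Function.mem_support.2 hne)
      rw [Set.mem_Icc, ← abs_le] at this
      exact absurd this (not_le.2 h1)
    simp [hφ, this]
  have hφvanishIoc : ∀ s : ℝ, s ∉ Set.Ioc (-ε) ε → ∀ u : ℝ, φ s * f (u - s) = 0 := by
    intro s hs u
    rw [Set.mem_Ioc, not_and_or] at hs
    have : ρ (s / ε) = 0 := by
      apply vanish_at_pm_one ρ hρsupp hρcont
      rw [habs_div, le_div_iff₀ hε, one_mul]
      rcases hs with h | h
      · push_neg at h; rw [abs_of_nonpos (by linarith)]; linarith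
      · push_neg at h; rw [abs_of_pos (by linarith)]; exact h.le
    simp [hφ, this]
  have hφcs : HasCompactSupport φ := HasCompactSupport.intro (isCompact_Icc (a := -ε) (b := ε))
    (fun x hx => hφsupp x (by rw [Set.mem_Icc, ← abs_le] at hx; exact not_le.mp hx))
  -- facts about f
  have hfcont : Continuous f :=
    trunc_continuous hτ₀ hτ₀T hC hμcont hμ0 hμnonneg hνpos hνmono ha hε hετ
  have hfbdd : ∀ u, |f u| ≤ A := fun u => by
    have := clamp_mem (ε := ε) (T := T) hε hεT u
    exact hA _ ⟨by linarith [this.1], this.2⟩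
  have hfli : LocallyIntegrable f := hfcont.locallyIntegrable
  -- mollify is the convolution
  have hkey : mollify ρ a T ε = φ ⋆[L] f := by
    funext u
    rw [mollify, intervalIntegral.integral_of_le (by linarith : -ε ≤ ε)]
    rw [setIntegral_eq_integral_of_forall_compl_eq_zero (fun x hx => hφvanishIoc x hx u)]
    rw [convolution_def]
    rfl
  -- derivative of the convolution
  have hD : HasDerivAt (φ ⋆[L] f) ((deriv φ ⋆[L] f) t) t :=
    hφcs.hasDerivAt_convolution_left L hφ1 hfli t
  have hderiv_eq : deriv (mollify ρ a T ε) t = (deriv φ ⋆[L] f) t := by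
    rw [hkey]; exact hD.deriv
  -- explicit formula for deriv φ
  set D : ℝ → ℝ := fun s => ε⁻¹ * (deriv ρ (s / ε) * (1 / ε)) with hDdef
  have hφ'has : ∀ s : ℝ, HasDerivAt φ (D s) s := by
    intro s
    have h1 : HasDerivAt (fun x : ℝ => x / ε) (1 / ε) s := (hasDerivAt_id s).div_const ε
    have h2 : HasDerivAt ρ (deriv ρ (s / ε)) (s / ε) :=
      ((hρsmooth.differentiable (by simp)) (s / ε)).hasDerivAt
    exact (h2.comp s h1).const_mul ε⁻¹
  have hφ'eq : deriv φ = D := funext fun s => (hφ'has s).deriv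
  have hDcont : Continuous D :=
    continuous_const.mul ((hρ'cont.comp (continuous_id.div_const ε)).mul continuous_const)
  have hDb : ∀ s, |D s| ≤ M / ε ^ 2 := by
    intro s
    rw [hDdef]
    have h1 : |ε⁻¹ * (deriv ρ (s / ε) * (1 / ε))| = ε⁻¹ * (|deriv ρ (s / ε)| * (1 / ε)) := by
      rw [abs_mul, abs_mul, abs_inv, abs_of_pos hε, abs_div, abs_of_pos hε, abs_one]
    rw [h1]
    have h2 : ε⁻¹ * (|deriv ρ (s / ε)| * (1 / ε)) ≤ ε⁻¹ * (M * (1 / ε)) := by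
      apply mul_le_mul_of_nonneg_left (mul_le_mul_of_nonneg_right (hMb _) (by positivity))
        (by positivity)
    calc ε⁻¹ * (|deriv ρ (s / ε)| * (1 / ε)) ≤ ε⁻¹ * (M * (1 / ε)) := h2
      _ = M / ε ^ 2 := by
          rw [pow_two, div_mul_eq_div_div, div_eq_mul_inv M ε, div_eq_mul_inv (M * ε⁻¹) ε]
          ring
  have hDsupp : ∀ s : ℝ, ε < |s| → D s = 0 := by
    intro s hs
    have h1 : 1 < |s / ε| := by rw [habs_div, lt_div_iff₀ hε]; linarith
    simp [hDdef, hρ'supp _ h1]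
  have hDcs : HasCompactSupport D := HasCompactSupport.intro (isCompact_Icc (a := -ε) (b := ε))
    (fun x hx => hDsupp x (by rw [Set.mem_Icc, ← abs_le] at hx; exact not_le.mp hx))
  have hconv : (deriv φ ⋆[L] f) t = ∫ s, D s * f (t - s) := by
    rw [convolution_def, hφ'eq]; rfl
  -- measure facts
  have hIcc : MeasurableSet (Set.Icc (-ε) ε) := measurableSet_Icc
  have hvol : (volume (Set.Icc (-ε) ε)).toReal = 2 * ε := by
    rw [Real.volume_Icc, ENNReal.toReal_ofReal (by linarith)]; ring
  have hvolfin : volume (Set.Icc (-ε) ε) < ⊤ := by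
    rw [Real.volume_Icc]; exact ENNReal.ofReal_lt_top
  -- bound 1
  have hbound1 : |(deriv φ ⋆[L] f) t| ≤ M / ε ^ 2 * A * (2 * ε) := by
    rw [hconv, ← setIntegral_eq_integral_of_forall_compl_eq_zero
      (s := Set.Icc (-ε) ε) (f := fun s => D s * f (t - s)) (fun x hx => by
        have h0 : D x = 0 := hDsupp x (by rw [Set.mem_Icc, ← abs_le] at hx; exact not_le.mp hx)
        simp [h0])]
    have bnd : ∀ x ∈ Set.Icc (-ε) ε, ‖D x * f (t - x)‖ ≤ M / ε ^ 2 * A := fun x _ => by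
      rw [Real.norm_eq_abs, abs_mul]
      exact mul_le_mul (hDb x) (hfbdd _) (abs_nonneg _) (by positivity)
    have hnorm := norm_setIntegral_le_of_norm_le_const hvolfin bnd
    rw [Real.norm_eq_abs, measureReal_def, hvol] at hnorm
    exact hnorm
  -- integral of D is zero
  have hintD : (∫ s, D s) = 0 := by
    have hsub : ∀ x : ℝ, x ∉ Set.Ioc (-(2*ε)) (2*ε) → D x = 0 := by
      intro x hx
      apply hDsupp
      rw [Set.mem_Ioc, not_and_or] at hx
      rcases hx with h | h
      · push_neg at h; rw [abs_of_nonpos (by linarith)]; linarith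
      · push_neg at h; rw [abs_of_pos (by linarith)]; linarith
    rw [← setIntegral_eq_integral_of_forall_compl_eq_zero hsub,
      ← intervalIntegral.integral_of_le (by linarith : -(2*ε) ≤ 2*ε), ← hφ'eq,
      intervalIntegral.integral_deriv_eq_sub
        (fun x _ => (hφ1.differentiable (by norm_num)).differentiableAt)
        ((hφ'eq ▸ hDcont).intervalIntegrable _ _)]
    rw [hφsupp (2*ε) (by rw [abs_of_pos (by linarith)]; linarith),
      hφsupp (-(2*ε)) (by rw [abs_of_nonpos (by linarith)]; linarith), sub_zero]
  -- rewrite with the difference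
  have hint2 : Integrable (fun s => D s * (f (t - s) - f t)) := by
    apply Continuous.integrable_of_hasCompactSupport
    · exact hDcont.mul ((hfcont.comp (continuous_const.sub continuous_id)).sub continuous_const)
    · exact HasCompactSupport.intro (isCompact_Icc (a := -ε) (b := ε))
        (fun x hx => by
          rw [hDsupp x (by rw [Set.mem_Icc, ← abs_le] at hx; exact not_le.mp hx), zero_mul])
  have hint3 : Integrable (fun s => D s * f t) :=
    (hDcont.integrable_of_hasCompactSupport hDcs).mul_const _
  have hsplit : (deriv φ ⋆[L] f) t = ∫ s, D s * (f (t - s) - f t) := by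
    rw [hconv]
    have heq : (fun s => D s * f (t - s)) =
        fun s => D s * (f (t - s) - f t) + D s * f t := by funext s; ring
    rw [heq, integral_add hint2 hint3, integral_mul_const, hintD, zero_mul, add_zero]
  -- bound 2
  have hbound2 : |(deriv φ ⋆[L] f) t| ≤ M / ε ^ 2 * (C / (κ * ν t) * μ ε) * (2 * ε) := by
    rw [hsplit, ← setIntegral_eq_integral_of_forall_compl_eq_zero
      (s := Set.Icc (-ε) ε) (f := fun s => D s * (f (t - s) - f t)) (fun x hx => by
        have h0 : D x = 0 := hDsupp x (by rw [Set.mem_Icc, ← abs_le] at hx; exact not_le.mp hx)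
        simp [h0])]
    have bnd : ∀ x ∈ Set.Icc (-ε) ε,
        ‖D x * (f (t - x) - f t)‖ ≤ M / ε ^ 2 * (C / (κ * ν t) * μ ε) := by
      intro x hx
      rw [Real.norm_eq_abs, abs_mul]
      refine mul_le_mul (hDb x) ?_ (abs_nonneg _) (by positivity)
      exact trunc_hoelder hτ₀ hτ₀T hC hκ hμmono hμnonneg hνpos hνmono hνdoub ha hε hετ ht
        (abs_le.mpr ⟨hx.1, hx.2⟩)
    have hnorm := norm_setIntegral_le_of_norm_le_const hvolfin bnd
    rw [Real.norm_eq_abs, measureReal_def, hvol] at hnorm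
    exact hnorm
  -- conclude
  rw [hderiv_eq]
  rcases min_cases 1 (μ ε / ν t) with ⟨hmin, _⟩ | ⟨hmin, _⟩
  · rw [hmin, mul_one]
    calc |(deriv φ ⋆[L] f) t| ≤ M / ε ^ 2 * A * (2 * ε) := hbound1
      _ = 2 * M * A / ε := by field_simp
      _ ≤ (2 * M * A + 2 * M * C / κ + 1) / ε := by
          have h0 : 0 ≤ 2 * M * C / κ := by positivity
          gcongr
          linarith
  · rw [hmin]
    calc |(deriv φ ⋆[L] f) t| ≤ M / ε ^ 2 * (C / (κ * ν t) * μ ε) * (2 * ε) := hbound2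
      _ = 2 * M * C / κ / ε * (μ ε / ν t) := by field_simp
      _ ≤ (2 * M * A + 2 * M * C / κ + 1) / ε * (μ ε / ν t) := by
          apply mul_le_mul_of_nonneg_right ?_ (div_nonneg hμε hνt.le)
          have h0 : 0 ≤ 2 * M * A := by positivity
          gcongr
          linarith
end

section
/- Let u : [0,T] → ℂ solve u''(t) + a(t)R²u(t) = 0 with a measurable, λ₀ ≤ a ≤ Λ₀, λ₀ > 0, R ≥ 1. Let b : [0,T] → ℝ be C¹ with λ₀ ≤ b ≤ Λ₀, and define the approximate energy E(t) = b(t)R²|u(t)|² + |u'(t)|². Then E'(t) ≤ ( |b'(t)|/b(t) + R·|b(t) − a(t)|/b(t)^{1/2} )·E(t) for a.e. t ∈ [0,T]. -/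
open Real MeasureTheory

/-!
Differentiating `E = b R² ‖u‖² + ‖u'‖²` and substituting `u'' = -a R² u` gives
`E' = b' R² ‖u‖² + 2 R² (b - a) ⟪u, u'⟫`. The first term is at most `|b'|/b · E`, and by
Cauchy–Schwarz and `2 (√b R ‖u‖) ‖u'‖ ≤ b R² ‖u‖² + ‖u'‖² ≤ E` the second is at most
`R |b - a| / √b · E`.
-/

section Energy

variable {F : Type*} [NormedAddCommGroup F] [InnerProductSpace ℝ F]

open scoped RealInnerProductSpace

theorem hasDerivAt_energy_of_eq_neg_smul {b : ℝ → ℝ} {u u' : ℝ → F} {β' α k t : ℝ} {w : F}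
    (hb : HasDerivAt b β' t) (hu : HasDerivAt u (u' t) t) (hu' : HasDerivAt u' w t)
    (hw : w = -(α * k) • u t) :
    HasDerivAt (fun s => b s * k * ‖u s‖ ^ 2 + ‖u' s‖ ^ 2)
      (β' * k * ‖u t‖ ^ 2 + 2 * k * (b t - α) * ⟪u t, u' t⟫) t := by
  refine ((hb.mul_const k).mul hu.norm_sq |>.add hu'.norm_sq).congr_deriv ?_
  rw [hw, inner_smul_right, real_inner_comm]
  ring

theorem mul_norm_sq_le_div_mul_energy {β β' k x y : ℝ} (hβ : 0 < β) (hk : 0 ≤ k)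
    (hx : 0 ≤ x) (hy : 0 ≤ y) :
    β' * k * x ≤ |β'| / β * (β * k * x + y) := calc
  β' * k * x ≤ |β'| * k * x := by gcongr; exact le_abs_self β'
  _ = |β'| / β * (β * k * x) := by field_simp
  _ ≤ |β'| / β * (β * k * x + y) := by gcongr; linarith

theorem mul_inner_le_div_sqrt_mul_energy {β R c : ℝ} (v w : F) (hβ : 0 < β) (hR : 0 ≤ R) :
    2 * R ^ 2 * c * ⟪v, w⟫ ≤ R * |c| / √β * (β * R ^ 2 * ‖v‖ ^ 2 + ‖w‖ ^ 2) := by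
  have hsqrt : 0 < √β := sqrt_pos.mpr hβ
  have hcs : c * ⟪v, w⟫ ≤ |c| * (‖v‖ * ‖w‖) := calc
    c * ⟪v, w⟫ ≤ |c * ⟪v, w⟫| := le_abs_self _
    _ = |c| * |⟪v, w⟫| := abs_mul _ _
    _ ≤ |c| * (‖v‖ * ‖w‖) := by gcongr; exact abs_real_inner_le_norm v w
  have hamgm : 2 * (√β * R * ‖v‖) * ‖w‖ ≤ β * R ^ 2 * ‖v‖ ^ 2 + ‖w‖ ^ 2 := by
    have := two_mul_le_add_sq (√β * R * ‖v‖) ‖w‖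
    rwa [mul_pow, mul_pow, sq_sqrt hβ.le] at this
  calc 2 * R ^ 2 * c * ⟪v, w⟫ = 2 * R ^ 2 * (c * ⟪v, w⟫) := by ring
    _ ≤ 2 * R ^ 2 * (|c| * (‖v‖ * ‖w‖)) := by gcongr
    _ = R * |c| / √β * (2 * (√β * R * ‖v‖) * ‖w‖) := by field_simp
    _ ≤ R * |c| / √β * (β * R ^ 2 * ‖v‖ ^ 2 + ‖w‖ ^ 2) := by gcongr

end Energy

theorem approximate_energy_inequality_general (T R lam Lam : ℝ) (hR : 1 ≤ R)
    (hlam : 0 < lam)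
    (a b b' : ℝ → ℝ) (u u' u'' : ℝ → ℂ)
    (hb : ∀ t ∈ Set.Icc (0:ℝ) T, lam ≤ b t ∧ b t ≤ Lam)
    (hb' : ∀ t ∈ Set.Icc (0:ℝ) T, HasDerivAt b (b' t) t)
    (hu' : ∀ t ∈ Set.Icc (0:ℝ) T, HasDerivAt u (u' t) t)
    (hu'' : ∀ᵐ t ∂(volume.restrict (Set.Icc (0:ℝ) T)), HasDerivAt u' (u'' t) t)
    (hODE : ∀ᵐ t ∂(volume.restrict (Set.Icc (0:ℝ) T)),
      u'' t + (a t * R ^ 2 : ℝ) * u t = 0)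
    (E : ℝ → ℝ)
    (hE : ∀ t, E t = b t * R ^ 2 * ‖u t‖ ^ 2 + ‖u' t‖ ^ 2) :
    ∀ᵐ t ∂(volume.restrict (Set.Icc (0:ℝ) T)),
      deriv E t ≤ (|b' t| / b t + R * |b t - a t| / Real.sqrt (b t)) * E t := by
  filter_upwards [hu'', hODE, ae_restrict_mem measurableSet_Icc] with t hu''t hODEt ht
  have hbt : 0 < b t := hlam.trans_le (hb t ht).1
  have hR0 : 0 ≤ R := zero_le_one.trans hR
  have hu''_eq : u'' t = -(a t * R ^ 2) • u t := by
    rw [neg_smul, Complex.real_smul]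
    exact eq_neg_of_add_eq_zero_left hODEt
  have hdE := hasDerivAt_energy_of_eq_neg_smul (hb' t ht) (hu' t ht) hu''t hu''_eq
  rw [← funext hE] at hdE
  rw [hdE.deriv, hE t, add_mul]
  gcongr ?_ + ?_
  · exact mul_norm_sq_le_div_mul_energy hbt (sq_nonneg R) (sq_nonneg _) (sq_nonneg _)
  · exact mul_inner_le_div_sqrt_mul_energy (u t) (u' t) hbt hR0

/-- Approximate-energy inequality: with `E = b R² |u|² + |u'|²`,
`E' ≤ (|b'|/b + R |b − a| / √b) E` a.e. on `[0,T]`. -/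
theorem approximate_energy_inequality (T R lam Lam : ℝ) (hT : 0 < T) (hR : 1 ≤ R)
    (hlam : 0 < lam) (hlamLam : lam ≤ Lam)
    (a b b' : ℝ → ℝ) (u u' u'' : ℝ → ℂ)
    (hameas : Measurable a)
    (ha : ∀ t ∈ Set.Icc (0:ℝ) T, lam ≤ a t ∧ a t ≤ Lam)
    (hb : ∀ t ∈ Set.Icc (0:ℝ) T, lam ≤ b t ∧ b t ≤ Lam)
    (hb' : ∀ t ∈ Set.Icc (0:ℝ) T, HasDerivAt b (b' t) t)
    (hb'cont : ContinuousOn b' (Set.Icc 0 T))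
    (hu' : ∀ t ∈ Set.Icc (0:ℝ) T, HasDerivAt u (u' t) t)
    (hu'' : ∀ᵐ t ∂(volume.restrict (Set.Icc (0:ℝ) T)), HasDerivAt u' (u'' t) t)
    (hODE : ∀ᵐ t ∂(volume.restrict (Set.Icc (0:ℝ) T)),
      u'' t + (a t * R ^ 2 : ℝ) * u t = 0)
    (E : ℝ → ℝ)
    (hE : ∀ t, E t = b t * R ^ 2 * ‖u t‖ ^ 2 + ‖u' t‖ ^ 2) :
    ∀ᵐ t ∂(volume.restrict (Set.Icc (0:ℝ) T)),
      deriv E t ≤ (|b' t| / b t + R * |b t - a t| / Real.sqrt (b t)) * E t :=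
  approximate_energy_inequality_general T R lam Lam hR hlam a b b' u u' u'' hb hb' hu' hu'' hODE E
    hE
end

section
/- Let ψ : [1,∞) → (0,∞) be C¹, strictly increasing, with ψ' non-increasing and r ↦ e^r ψ'(r) non-decreasing, and suppose ψ'(r) → η ∈ [0,∞) as r → ∞. Define ν(t) = t/ψ'(|log t|) for 0 < t ≤ e^{-1} and ν(t) = e^{-1}/ψ'(1) for t ≥ e^{-1}. Then ν is continuous, non-decreasing on (0,T], and satisfies ν(t/2) ≥ (1/2)ν(t) for all t ∈ (0,T]. -/
open Real Filter

/-- With `ν(t) = t/ψ'(|log t|)` for `0 < t ≤ e⁻¹` and `ν(t) = e⁻¹/ψ'(1)` for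
`t ≥ e⁻¹`, the function `ν` is continuous, non-decreasing on `(0,T]` and
satisfies `ν(t/2) ≥ (1/2)ν(t)`. -/
theorem nu_from_psi_properties (T η : ℝ) (hT : 0 < T) (hη : 0 ≤ η)
    (ψ ψd : ℝ → ℝ)
    (hψpos : ∀ r ∈ Set.Ici (1:ℝ), 0 < ψ r)
    (hψd : ∀ r ∈ Set.Ici (1:ℝ), HasDerivAt ψ (ψd r) r)
    (hψdcont : ContinuousOn ψd (Set.Ici 1))
    (hψmono : StrictMonoOn ψ (Set.Ici 1))
    (hψdanti : AntitoneOn ψd (Set.Ici 1))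
    (hexp : MonotoneOn (fun r => Real.exp r * ψd r) (Set.Ici 1))
    (hlim : Tendsto ψd atTop (nhds η))
    (ν : ℝ → ℝ)
    (hν : ∀ t : ℝ, ν t = if t ≤ Real.exp (-1)
      then t / ψd (-Real.log t) else Real.exp (-1) / ψd 1) :
    ContinuousOn ν (Set.Ioc 0 T) ∧ MonotoneOn ν (Set.Ioc 0 T) ∧
      ∀ t ∈ Set.Ioc (0:ℝ) T, ν (t / 2) ≥ (1 / 2) * ν t := by
  set c := Real.exp (-1) with hc
  have hcpos : 0 < c := Real.exp_pos _
  have hlogc : -Real.log c = 1 := by rw [hc, Real.log_exp]; ring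
  -- η ≤ ψd r for r ≥ 1
  have hηle : ∀ r ∈ Set.Ici (1:ℝ), η ≤ ψd r := by
    intro r hr
    refine le_of_tendsto hlim ?_
    filter_upwards [eventually_ge_atTop r] with s hs
    exact hψdanti hr (le_trans hr hs) hs
  -- ψd is positive on [1,∞)
  have hψdpos : ∀ r ∈ Set.Ici (1:ℝ), 0 < ψd r := by
    intro r hr
    have hr' : (1:ℝ) ≤ r := hr
    rcases lt_or_eq_of_le (hη.trans (hηle r hr)) with h | h
    · exact h
    · exfalso
      have h0 : ∀ s ∈ Set.Icc r (r + 1), ψd s = 0 := by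
        intro s hs
        have hs1 : (1:ℝ) ≤ s := le_trans hr hs.1
        have h1 := hψdanti hr hs1 hs.1
        have h2 := hηle s hs1
        linarith
      obtain ⟨x, hx, hslope⟩ := exists_hasDerivAt_eq_slope ψ ψd
        (by linarith : r < r + 1)
        (fun y hy => (hψd y (le_trans hr hy.1)).continuousAt.continuousWithinAt)
        (fun y hy => hψd y (le_trans hr (le_of_lt hy.1)))
      have hx0 : ψd x = 0 := h0 x ⟨le_of_lt hx.1, le_of_lt hx.2⟩
      have hlt : ψ r < ψ (r + 1) :=
        hψmono hr (Set.mem_Ici.2 (by linarith)) (by linarith)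
      rw [hx0] at hslope
      have h1 : (r + 1 - r : ℝ) = 1 := by ring
      rw [h1, div_one] at hslope
      linarith
  -- -log t ≥ 1 for 0 < t ≤ c
  have hlog1 : ∀ t : ℝ, 0 < t → t ≤ c → (1:ℝ) ≤ -Real.log t := by
    intro t ht htc
    have := (Real.log_le_iff_le_exp ht).2 htc
    linarith
  -- explicit values
  have hνval : ∀ t : ℝ, t ≤ c → ν t = t / ψd (-Real.log t) := by
    intro t htc; rw [hν t, if_pos htc]
  have hνval' : ∀ t : ℝ, ¬ t ≤ c → ν t = c / ψd 1 := by
    intro t htc; rw [hν t, if_neg htc]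
  have hνc : ν c = c / ψd 1 := by rw [hνval c le_rfl, hlogc]
  -- alternate form on (0, c]
  have hνalt : ∀ t : ℝ, 0 < t → t ≤ c →
      ν t = (Real.exp (-Real.log t) * ψd (-Real.log t))⁻¹ := by
    intro t ht htc
    rw [hνval t htc, Real.exp_neg, Real.exp_log ht, mul_inv, inv_inv,
      div_eq_mul_inv]
  -- monotone on (0, c]
  have hmono_c : ∀ a b : ℝ, 0 < a → a ≤ b → b ≤ c → ν a ≤ ν b := by
    intro a b ha hab hbc
    have hb : 0 < b := lt_of_lt_of_le ha hab
    have hac : a ≤ c := hab.trans hbc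
    rw [hνalt a ha hac, hνalt b hb hbc]
    have hra : (1:ℝ) ≤ -Real.log a := hlog1 a ha hac
    have hrb : (1:ℝ) ≤ -Real.log b := hlog1 b hb hbc
    have hle : -Real.log b ≤ -Real.log a := by
      have := Real.log_le_log ha hab
      linarith
    have hmul := hexp hrb hra hle
    have hposb : 0 < Real.exp (-Real.log b) * ψd (-Real.log b) :=
      mul_pos (Real.exp_pos _) (hψdpos _ hrb)
    exact inv_anti₀ hposb hmul
  -- monotone on (0, ∞)
  have hmono : ∀ a b : ℝ, 0 < a → a ≤ b → ν a ≤ ν b := by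
    intro a b ha hab
    by_cases hbc : b ≤ c
    · exact hmono_c a b ha hab hbc
    · rw [hνval' b hbc, ← hνc]
      by_cases hac : a ≤ c
      · exact hmono_c a c ha hac le_rfl
      · rw [hνval' a hac, hνc]
  -- half property on (0, c]
  have hhalf_c : ∀ t : ℝ, 0 < t → t ≤ c → (1 / 2) * ν t ≤ ν (t / 2) := by
    intro t ht htc
    have ht2 : 0 < t / 2 := by linarith
    have htc2 : t / 2 ≤ c := by linarith
    rw [hνval t htc, hνval _ htc2]
    have hrt : (1:ℝ) ≤ -Real.log t := hlog1 t ht htc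
    have hrt2 : (1:ℝ) ≤ -Real.log (t / 2) := hlog1 _ ht2 htc2
    have hle : -Real.log t ≤ -Real.log (t / 2) := by
      have := Real.log_le_log ht2 (by linarith : t / 2 ≤ t)
      linarith
    have hanti := hψdanti hrt hrt2 hle
    have hp1 : 0 < ψd (-Real.log t) := hψdpos _ hrt
    have hp2 : 0 < ψd (-Real.log (t / 2)) := hψdpos _ hrt2
    rw [ge_iff_le.symm] at *
    have : t / 2 / ψd (-Real.log t) ≤ t / 2 / ψd (-Real.log (t / 2)) :=
      div_le_div_of_nonneg_left (by linarith) hp2 hanti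
    calc (1 / 2) * (t / ψd (-Real.log t)) = t / 2 / ψd (-Real.log t) := by ring
      _ ≤ _ := this
  -- half property on (0, ∞)
  have hhalf : ∀ t : ℝ, 0 < t → (1 / 2) * ν t ≤ ν (t / 2) := by
    intro t ht
    by_cases htc : t ≤ c
    · exact hhalf_c t ht htc
    · rw [hνval' t htc, ← hνc]
      calc (1 / 2) * ν c ≤ ν (c / 2) := hhalf_c c hcpos le_rfl
        _ ≤ ν (t / 2) := hmono _ _ (by linarith) (by push_neg at htc; linarith)
  -- continuity
  have hcont : ContinuousOn ν (Set.Ioi (0:ℝ)) := by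
    have h1 : ContinuousOn (fun t : ℝ => min t c) (Set.Ioi 0) :=
      (continuous_id.min continuous_const).continuousOn
    have h2 : ContinuousOn (fun t : ℝ => -Real.log (min t c)) (Set.Ioi 0) := by
      refine ContinuousOn.neg ?_
      refine Real.continuousOn_log.comp h1 ?_
      intro t ht
      simp only [Set.mem_compl_iff, Set.mem_singleton_iff]
      exact ne_of_gt (lt_min ht hcpos)
    have h3 : ContinuousOn (fun t : ℝ => ψd (-Real.log (min t c))) (Set.Ioi 0) := by
      refine hψdcont.comp h2 ?_
      intro t ht
      exact hlog1 _ (lt_min ht hcpos) (min_le_right _ _)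
    have h4 : ContinuousOn (fun t : ℝ => min t c / ψd (-Real.log (min t c)))
        (Set.Ioi 0) := by
      refine h1.div h3 ?_
      intro t ht
      exact ne_of_gt (hψdpos _ (hlog1 _ (lt_min ht hcpos) (min_le_right _ _)))
    refine ContinuousOn.congr h4 ?_
    intro t ht
    by_cases htc : t ≤ c
    · rw [hνval t htc]; simp only; rw [min_eq_left htc]
    · rw [hνval' t htc]; simp only
      rw [min_eq_right (le_of_not_ge htc), hlogc]
  refine ⟨hcont.mono ?_, ?_, ?_⟩
  · intro t ht; exact ht.1
  · intro a ha b hb hab; exact hmono a b ha.1 hab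
  · intro t ht; exact hhalf t ht.1
end
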